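/- Let 1 ≤ p < ∞. There exists a constant C > 0 such that for every μ-measurable function f on ℝ, ‖ y ↦ ‖f χ_{I(y,3)}‖_{L^∞(μ)} ‖_{L^p(μ)} ≤ C \widetilde{‖f‖}_{∞,p}. -/

import Mathlib

open MeasureTheory Set
open scoped ENNReal

/-- The weighted Lebesgue measure `dμ(x) = (2^{k+1} Γ(k+1))⁻¹ |x|^{2k+1} dx`. -/
noncomputable def dunklMeasure (k : ℝ) : Measure ℝ :=
  (volume : Measure ℝ).withDensity
    (fun x => ENNReal.ofReal ((2 ^ (k + 1) * Real.Gamma (k + 1))⁻¹ * |x| ^ (2 * k + 1)))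
/-- `Q_l = [l, l+1)`. -/
def Qcube (l : ℤ) : Set ℝ := Set.Ico (l : ℝ) ((l : ℝ) + 1)
/-- `I(x,r) = (x-r, x+r)`. -/
def Iv (x r : ℝ) : Set ℝ := Set.Ioo (x - r) (x + r)
/-- The discrete norm `\widetilde{‖f‖}_{q,p}`. -/
noncomputable def tNorm (k : ℝ) (q p : ℝ≥0∞) (f : ℝ → ℂ) : ℝ≥0∞ :=
  if p = ⊤ then ⨆ l : ℤ, eLpNorm ((Qcube l).indicator f) q (dunklMeasure k)
  else (∑' l : ℤ,
      dunklMeasure k (Qcube l) * (eLpNorm ((Qcube l).indicator f) q (dunklMeasure k)) ^ p.toReal)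
    ^ (1 / p.toReal)

/-!
For `y ∈ Q_l` the window `I(y,3)` is covered by the seven cubes `Q_{l+j}`, `|j| ≤ 3`, so
`‖f χ_{I(y,3)}‖_∞^p ≤ ∑_j ‖f χ_{Q_{l+j}}‖_∞^p` on `Q_l`. Integrating over each `Q_l` and summing
gives `∑_j ∑_l μ(Q_l) ‖f χ_{Q_{l+j}}‖_∞^p`, and after shifting `l ↦ l - j` every inner sum is
controlled by `\widetilde{‖f‖}_{∞,p}^p` because `μ` is doubling on neighbouring cubes:
`μ(Q_{l-j}) ≤ D μ(Q_l)` for `|j| ≤ 3`, as the density `|x|^{2k+1}` is increasing in `|x|` and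
homogeneous.
-/

theorem ENNReal.finset_sup_rpow_le_sum {ι : Type*} (t : Finset ι) (b : ι → ℝ≥0∞) {r : ℝ}
    (hr : 0 < r) : t.sup b ^ r ≤ ∑ i ∈ t, b i ^ r := by
  have := map_finset_sup (ENNReal.orderIsoRpow r hr) t b
  simp only [ENNReal.orderIsoRpow_apply] at this
  rw [this]
  exact Finset.sup_le fun i hi => Finset.single_le_sum (f := fun i => b i ^ r)
    (fun _ _ => zero_le) hi

theorem eLpNorm_top_indicator_le_finset_sup {α E ι : Type*} [MeasurableSpace α]
    [NormedAddCommGroup E] {μ : Measure α} {s : Set α} (A : ι → Set α) (t : Finset ι)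
    (hs : s ⊆ ⋃ i ∈ t, A i) (f : α → E) :
    eLpNorm (s.indicator f) ⊤ μ ≤ t.sup fun i => eLpNorm ((A i).indicator f) ⊤ μ := by
  rw [eLpNorm_exponent_top]
  refine eLpNormEssSup_le_of_ae_enorm_bound ?_
  filter_upwards [(Filter.eventually_all_finset t).2 fun i _ =>
    ae_le_eLpNormEssSup (μ := μ) (f := (A i).indicator f)] with x hx
  by_cases hxs : x ∈ s
  · obtain ⟨i, hi, hxA⟩ := mem_iUnion₂.1 (hs hxs)
    calc ‖s.indicator f x‖ₑ = ‖(A i).indicator f x‖ₑ := by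
          rw [indicator_of_mem hxs, indicator_of_mem hxA]
      _ ≤ eLpNorm ((A i).indicator f) ⊤ μ := by rw [eLpNorm_exponent_top]; exact hx i hi
      _ ≤ _ := Finset.le_sup (f := fun i => eLpNorm ((A i).indicator f) ⊤ μ) hi
  · simp [indicator_of_notMem hxs]

theorem ENNReal.tsum_mul_shift_le {w b : ℤ → ℝ≥0∞} {D : ℝ≥0∞} (j : ℤ)
    (hw : ∀ m, w (m - j) ≤ D * w m) : ∑' l, w l * b (l + j) ≤ D * ∑' m, w m * b m := by
  rw [← (Equiv.subRight j).tsum_eq, ← ENNReal.tsum_mul_left]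
  refine ENNReal.tsum_le_tsum fun m => ?_
  simp only [Equiv.subRight_apply, sub_add_cancel, ← mul_assoc]
  gcongr
  exact hw m

theorem measurableSet_Qcube (l : ℤ) : MeasurableSet (Qcube l) := measurableSet_Ico

theorem floor_eq_of_mem_Qcube {x : ℝ} {l : ℤ} (hx : x ∈ Qcube l) : ⌊x⌋ = l :=
  Int.floor_eq_iff.2 hx

theorem lintegral_eq_tsum_Qcube (ν : Measure ℝ) (F : ℝ → ℝ≥0∞) :
    ∫⁻ y, F y ∂ν = ∑' l, ∫⁻ y in Qcube l, F y ∂ν := by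
  rw [← setLIntegral_univ, ← iUnion_Ico_intCast ℝ]
  exact lintegral_iUnion measurableSet_Qcube (pairwise_disjoint_Ico_intCast ℝ) F

theorem Iv_subset_iUnion_Qcube (y : ℝ) (n : ℕ) :
    Iv y n ⊆ ⋃ j ∈ Finset.Icc (-(n : ℤ)) n, Qcube (⌊y⌋ + j) := by
  intro x ⟨hx₁, hx₂⟩
  have h₁ : ⌊y⌋ - n ≤ ⌊x⌋ := Int.le_floor.2 (by push_cast; linarith [Int.floor_le y])
  have h₂ : ⌊x⌋ < ⌊y⌋ + n + 1 := Int.floor_lt.2 (by push_cast; linarith [Int.lt_floor_add_one y])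
  refine mem_iUnion₂.2 ⟨⌊x⌋ - ⌊y⌋, Finset.mem_Icc.2 ⟨by omega, by omega⟩, ?_⟩
  rw [add_sub_cancel]
  exact ⟨Int.floor_le x, Int.lt_floor_add_one x⟩

noncomputable def dunklDensity (k x : ℝ) : ℝ :=
  (2 ^ (k + 1) * Real.Gamma (k + 1))⁻¹ * |x| ^ (2 * k + 1)

theorem dunklMeasure_eq_withDensity (k : ℝ) :
    dunklMeasure k = volume.withDensity fun x => ENNReal.ofReal (dunklDensity k x) := rfl

section
variable {k : ℝ}

theorem dunklDensity_nonneg (hk : -1/2 < k) (x : ℝ) : 0 ≤ dunklDensity k x := by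
  have : 0 < Real.Gamma (k + 1) := Real.Gamma_pos_of_pos (by linarith)
  unfold dunklDensity
  positivity

theorem dunklDensity_le_of_abs_le (hk : -1/2 < k) {x y : ℝ} (h : |x| ≤ |y|) :
    dunklDensity k x ≤ dunklDensity k y := by
  have : 0 < Real.Gamma (k + 1) := Real.Gamma_pos_of_pos (by linarith)
  unfold dunklDensity
  gcongr
  linarith

theorem dunklDensity_mul {t : ℝ} (ht : 0 ≤ t) (x : ℝ) :
    dunklDensity k (t * x) = t ^ (2 * k + 1) * dunklDensity k x := by
  simp only [dunklDensity, abs_mul, abs_of_nonneg ht, Real.mul_rpow ht (abs_nonneg x)]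
  ring

theorem dunklMeasure_le_of_abs_le (hk : -1/2 < k) {s : Set ℝ} (hs : MeasurableSet s) {R : ℝ}
    (h : ∀ x ∈ s, |x| ≤ |R|) :
    dunklMeasure k s ≤ ENNReal.ofReal (dunklDensity k R) * volume s := by
  rw [dunklMeasure_eq_withDensity, withDensity_apply _ hs, ← setLIntegral_const]
  exact setLIntegral_mono' hs fun x hx =>
    ENNReal.ofReal_le_ofReal (dunklDensity_le_of_abs_le hk (h x hx))

theorem le_dunklMeasure_of_le_abs (hk : -1/2 < k) {s : Set ℝ} (hs : MeasurableSet s) {u : ℝ}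
    (h : ∀ x ∈ s, |u| ≤ |x|) :
    ENNReal.ofReal (dunklDensity k u) * volume s ≤ dunklMeasure k s := by
  rw [dunklMeasure_eq_withDensity, withDensity_apply _ hs, ← setLIntegral_const]
  exact setLIntegral_mono' hs fun x hx =>
    ENNReal.ofReal_le_ofReal (dunklDensity_le_of_abs_le hk (h x hx))

end

theorem exists_Ico_subset_Qcube_le_abs (m : ℤ) :
    ∃ a, Ico a (a + 1 / 2) ⊆ Qcube m ∧ ∀ x ∈ Ico a (a + 1 / 2), (|(m : ℝ)| + 1) / 4 ≤ |x| := by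
  rcases le_or_gt 0 m with hm | hm
  · have hm' : (0 : ℝ) ≤ m := by exact_mod_cast hm
    refine ⟨m + 1 / 2, fun x ⟨h₁, h₂⟩ => ⟨by linarith, by linarith⟩, fun x ⟨h₁, _⟩ => ?_⟩
    rw [abs_of_nonneg hm', abs_of_nonneg (by linarith)]
    linarith
  · have hm' : (m : ℝ) ≤ -1 := by exact_mod_cast Int.le_sub_one_of_lt hm
    refine ⟨m, fun x ⟨h₁, h₂⟩ => ⟨h₁, by linarith⟩, fun x ⟨_, h₂⟩ => ?_⟩
    rw [abs_of_neg (by linarith), abs_of_neg (by linarith)]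
    linarith

/- `Q_{m+j}` lies in `|x| ≤ (n+1)(|m|+1) = 4(n+1) t`, while `Q_m` contains a half-interval on which
`|x| ≥ t := (|m|+1)/4`; homogeneity of the density gives the factor `(4(n+1))^(2k+1)`. -/
theorem dunklMeasure_Qcube_add_le {k : ℝ} (hk : -1/2 < k) {n : ℕ} (m : ℤ) {j : ℤ}
    (hj : |j| ≤ n) :
    dunklMeasure k (Qcube (m + j)) ≤
      ENNReal.ofReal (2 * (4 * (n + 1)) ^ (2 * k + 1)) * dunklMeasure k (Qcube m) := by
  obtain ⟨a, ha_sub, ha_abs⟩ := exists_Ico_subset_Qcube_le_abs m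
  set t : ℝ := (|(m : ℝ)| + 1) / 4
  have ht : 0 ≤ t := by positivity
  have hupper : ∀ x ∈ Qcube (m + j), |x| ≤ |4 * (n + 1) * t| := by
    intro x ⟨h₁, h₂⟩
    have hn : (0 : ℝ) ≤ n := n.cast_nonneg
    have ht' : 4 * ((n : ℝ) + 1) * t = (n + 1) * (|(m : ℝ)| + 1) := by simp only [t]; ring
    have hj' : |(j : ℝ)| ≤ n := by exact_mod_cast hj
    push_cast at h₁ h₂
    rw [abs_of_nonneg (a := 4 * ((n : ℝ) + 1) * t) (mul_nonneg (by positivity) ht), ht', abs_le]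
    rw [abs_le] at hj'
    have := neg_abs_le (m : ℝ)
    have := le_abs_self (m : ℝ)
    constructor <;> nlinarith [mul_nonneg hn (abs_nonneg (m : ℝ))]
  calc dunklMeasure k (Qcube (m + j))
      ≤ ENNReal.ofReal (dunklDensity k (4 * (n + 1) * t)) * volume (Qcube (m + j)) :=
        dunklMeasure_le_of_abs_le hk (measurableSet_Qcube _) hupper
    _ = ENNReal.ofReal (2 * (4 * (n + 1)) ^ (2 * k + 1)) *
          (ENNReal.ofReal (dunklDensity k t) * volume (Ico a (a + 1 / 2))) := by
        rw [dunklDensity_mul (by positivity), Qcube, Real.volume_Ico, Real.volume_Ico,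
          ← ENNReal.ofReal_mul, ← ENNReal.ofReal_mul, ← ENNReal.ofReal_mul]
        · congr 1; ring
        all_goals have := dunklDensity_nonneg hk t; positivity
    _ ≤ ENNReal.ofReal (2 * (4 * (n + 1)) ^ (2 * k + 1)) *
          dunklMeasure k (Ico a (a + 1 / 2)) := by
        gcongr
        exact le_dunklMeasure_of_le_abs hk measurableSet_Ico fun x hx => by
          rw [abs_of_nonneg ht]; exact ha_abs x hx
    _ ≤ _ := by gcongr

theorem lintegral_eLpNorm_indicator_Iv_rpow_le {E : Type*} [NormedAddCommGroup E] {k : ℝ}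
    (hk : -1/2 < k) (n : ℕ) {r : ℝ} (hr : 0 < r) (f : ℝ → E) :
    ∫⁻ y, eLpNorm ((Iv y n).indicator f) ⊤ (dunklMeasure k) ^ r ∂dunklMeasure k ≤
      (2 * n + 1) * ENNReal.ofReal (2 * (4 * (n + 1)) ^ (2 * k + 1)) *
        ∑' l, dunklMeasure k (Qcube l) *
          eLpNorm ((Qcube l).indicator f) ⊤ (dunklMeasure k) ^ r := by
  set μ := dunklMeasure k
  set D := ENNReal.ofReal (2 * (4 * (n + 1)) ^ (2 * k + 1))
  set a : ℤ → ℝ≥0∞ := fun l => eLpNorm ((Qcube l).indicator f) ⊤ μ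
  set s := Finset.Icc (-(n : ℤ)) n
  have hcube : ∀ l, ∀ y ∈ Qcube l,
      eLpNorm ((Iv y n).indicator f) ⊤ μ ^ r ≤ ∑ j ∈ s, a (l + j) ^ r := by
    intro l y hy
    rw [← floor_eq_of_mem_Qcube hy]
    calc eLpNorm ((Iv y n).indicator f) ⊤ μ ^ r ≤ (s.sup fun j => a (⌊y⌋ + j)) ^ r := by
          gcongr
          exact eLpNorm_top_indicator_le_finset_sup _ s (Iv_subset_iUnion_Qcube y n) f
      _ ≤ ∑ j ∈ s, a (⌊y⌋ + j) ^ r := ENNReal.finset_sup_rpow_le_sum _ _ hr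
  have hshift : ∀ j ∈ s, ∀ m, μ (Qcube (m - j)) ≤ D * μ (Qcube m) := by
    intro j hj m
    rw [sub_eq_add_neg]
    rw [Finset.mem_Icc] at hj
    exact dunklMeasure_Qcube_add_le hk m (abs_le.2 (by omega))
  have hcard : (s.card : ℝ≥0∞) = 2 * n + 1 := by
    rw [Int.card_Icc, show ((n : ℤ) + 1 - -n).toNat = 2 * n + 1 by omega]
    push_cast
    rfl
  calc ∫⁻ y, eLpNorm ((Iv y n).indicator f) ⊤ μ ^ r ∂μ
      = ∑' l, ∫⁻ y in Qcube l, eLpNorm ((Iv y n).indicator f) ⊤ μ ^ r ∂μ :=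
        lintegral_eq_tsum_Qcube _ _
    _ ≤ ∑' l, ∑ j ∈ s, μ (Qcube l) * a (l + j) ^ r := by
        refine ENNReal.tsum_le_tsum fun l => ?_
        rw [← Finset.mul_sum, mul_comm, ← setLIntegral_const]
        exact setLIntegral_mono' (measurableSet_Qcube l) (hcube l)
    _ = ∑ j ∈ s, ∑' l, μ (Qcube l) * a (l + j) ^ r :=
        Summable.tsum_finsetSum fun _ _ => ENNReal.summable
    _ ≤ ∑ _j ∈ s, D * ∑' m, μ (Qcube m) * a m ^ r :=
        Finset.sum_le_sum fun j hj => ENNReal.tsum_mul_shift_le j (hshift j hj)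
    _ = (2 * n + 1) * D * ∑' m, μ (Qcube m) * a m ^ r := by
        rw [Finset.sum_const, nsmul_eq_mul, hcard, mul_assoc]

/-- For `1 ≤ p < ∞` there is `C > 0` with
`‖ y ↦ ‖f χ_{I(y,3)}‖_{L^∞(μ)} ‖_{L^p(μ)} ≤ C \widetilde{‖f‖}_{∞,p}` for every measurable `f`. -/
theorem stmt16 (k : ℝ) (hk : -1/2 < k) (p : ℝ≥0∞) (hp1 : 1 ≤ p) (hp : p ≠ ⊤) :
    ∃ C : ℝ≥0∞, 0 < C ∧ C ≠ ⊤ ∧ ∀ f : ℝ → ℂ, Measurable f →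
      (∫⁻ y, (eLpNorm ((Iv y 3).indicator f) ⊤ (dunklMeasure k)) ^ p.toReal
          ∂(dunklMeasure k)) ^ (1 / p.toReal) ≤ C * tNorm k ⊤ p f := by
  have hp0 : 0 < p.toReal := ENNReal.toReal_pos (zero_lt_one.trans_le hp1).ne' hp
  set C₀ : ℝ≥0∞ := (2 * 3 + 1) * ENNReal.ofReal (2 * (4 * (3 + 1)) ^ (2 * k + 1))
  have hC₀ : C₀ ≠ 0 := mul_ne_zero (by norm_num) (ENNReal.ofReal_pos.2 (by positivity)).ne'
  have hC₀_top : C₀ ≠ ⊤ := ENNReal.mul_ne_top (by norm_num) ENNReal.ofReal_ne_top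
  refine ⟨C₀ ^ (1 / p.toReal), ENNReal.rpow_pos (pos_iff_ne_zero.2 hC₀) hC₀_top,
    ENNReal.rpow_ne_top_of_nonneg (by positivity) hC₀_top, fun f _ => ?_⟩
  have h := lintegral_eLpNorm_indicator_Iv_rpow_le hk 3 hp0 f
  push_cast at h
  calc _ ≤ (C₀ * ∑' l, dunklMeasure k (Qcube l) *
          eLpNorm ((Qcube l).indicator f) ⊤ (dunklMeasure k) ^ p.toReal) ^ (1 / p.toReal) := by
        gcongr
    _ = C₀ ^ (1 / p.toReal) * tNorm k ⊤ p f := by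
        rw [ENNReal.mul_rpow_of_nonneg _ _ (by positivity), tNorm, if_neg hp]
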